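/- arXiv:1008.5361 — 7 statements merged into one kernel-verified Lean document; each statement's English description precedes it below -/
import Mathlib

section
/- Let 0 < q < 1 and let d̄_k > 0 (k ≥ 1) satisfy (log d̄_k)/k → log q as k → ∞. Then Σ_{k≥1} d̄_k < ∞, and with k₀(n) = min{ k ≥ 0 : n·Σ_{ℓ>k} d̄_ℓ ≤ 1 } and k₁(n) = max{ k ≥ 0 : n·Σ_{ℓ>k} d̄_ℓ ≥ log n } (the latter well defined for all sufficiently large n), one has k₀(n)/log n → 1/log(1/q) and k₁(n)/log n → 1/log(1/q) as n → ∞. -/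
/-!
Put `f k = -log (∑_{ℓ>k} d̄_ℓ)`. The tail lies between its first term `d̄_{k+1}` and, once
`d̄_ℓ ≤ r ^ ℓ` with `q < r < 1`, the geometric tail `r ^ (k+1) / (1 - r)`; hence
`f k / k → log (1/q)`. After taking logarithms the thresholds read
`k₀(n) = min {k : log n ≤ f k}` and `k₁(n) = max {k : f k ≤ log n - log log n}`, and for any `f`
with `f k / k → c > 0` the first index at which `f` reaches `x` and the last at which it stays
below `x` are squeezed between consecutive `k` with `f k ≤ x ≤ f (k + 1)`, so both are
`x / c + o(x)`.
-/

open Filter Topology Real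

noncomputable def tailSum (a : ℕ → ℝ) (k : ℕ) : ℝ := ∑' j, a (k + 1 + j)

section Inversion

variable {f : ℕ → ℝ} {c : ℝ}

lemma tendsto_atTop_of_tendsto_div_natCast (hf : Tendsto (fun k : ℕ => f k / k) atTop (𝓝 c))
    (hc : 0 < c) : Tendsto f atTop atTop := by
  refine (hf.pos_mul_atTop hc tendsto_natCast_atTop_atTop).congr' ?_
  filter_upwards [eventually_ne_atTop 0] with k hk
  exact div_mul_cancel₀ _ (Nat.cast_ne_zero.2 hk)

lemma tendsto_succ_div_natCast (hf : Tendsto (fun k : ℕ => f k / k) atTop (𝓝 c)) :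
    Tendsto (fun k : ℕ => f (k + 1) / k) atTop (𝓝 c) := by
  have hshift : Tendsto (fun k : ℕ => f (k + 1) / ((k + 1 : ℕ) : ℝ)) atTop (𝓝 c) :=
    hf.comp (tendsto_add_atTop_nat 1)
  have hratio : Tendsto (fun k : ℕ => 1 + (k : ℝ)⁻¹) atTop (𝓝 1) := by
    simpa using tendsto_inv_atTop_nhds_zero_nat.const_add (1 : ℝ)
  refine (mul_one c ▸ hshift.mul hratio).congr' ?_
  filter_upwards [eventually_ne_atTop 0] with k hk
  have hk' : (k : ℝ) ≠ 0 := Nat.cast_ne_zero.2 hk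
  push_cast
  field_simp

lemma bddAbove_setOf_apply_le (hf : Tendsto f atTop atTop) (x : ℝ) : BddAbove {k | f k ≤ x} := by
  have h := hf.eventually_gt_atTop x
  rw [← Nat.cofinite_eq_atTop, eventually_cofinite] at h
  simpa only [not_lt] using h.bddAbove

lemma tendsto_atTop_of_le_apply {α : Type*} {l : Filter α} {x : α → ℝ} {j : α → ℕ}
    (hx : Tendsto x l atTop) (hle : ∀ᶠ a in l, x a ≤ f (j a)) : Tendsto j l atTop := by
  refine tendsto_atTop.2 fun K => ?_
  obtain ⟨B, hB⟩ := ((Set.finite_Iio K).image f).bddAbove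
  filter_upwards [hle, hx.eventually_gt_atTop B] with a hle hBx
  by_contra! hlt
  exact (hB ⟨j a, hlt, rfl⟩).not_gt (hBx.trans_le hle)

lemma tendsto_natCast_div_of_apply_le_le_apply_succ
    (hf : Tendsto (fun k : ℕ => f k / k) atTop (𝓝 c)) (hc : 0 < c)
    {α : Type*} {l : Filter α} {x : α → ℝ} {j : α → ℕ} (hx : Tendsto x l atTop)
    (hj : ∀ᶠ a in l, f (j a) ≤ x a ∧ x a ≤ f (j a + 1)) :
    Tendsto (fun a => (j a : ℝ) / x a) l (𝓝 c⁻¹) := by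
  have hjTop : Tendsto j l atTop :=
    tendsto_atTop_of_le_apply (f := fun k => f (k + 1)) hx (hj.mono fun _ h => h.2)
  have hsqueeze : Tendsto (fun a => x a / j a) l (𝓝 c) :=
    tendsto_of_tendsto_of_tendsto_of_le_of_le' (hf.comp hjTop)
      ((tendsto_succ_div_natCast hf).comp hjTop)
      (hj.mono fun _ h => div_le_div_of_nonneg_right h.1 (Nat.cast_nonneg _))
      (hj.mono fun _ h => div_le_div_of_nonneg_right h.2 (Nat.cast_nonneg _))
  simpa only [inv_div] using hsqueeze.inv₀ hc.ne'

lemma tendsto_sInf_setOf_le_apply_div (hf : Tendsto (fun k : ℕ => f k / k) atTop (𝓝 c))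
    (hc : 0 < c) : Tendsto (fun x : ℝ => (sInf {k | x ≤ f k} : ℕ) / x) atTop (𝓝 c⁻¹) := by
  set N : ℝ → ℕ := fun x => sInf {k | x ≤ f k}
  have hmem (x : ℝ) : x ≤ f (N x) :=
    Nat.sInf_mem ((tendsto_atTop_of_tendsto_div_natCast hf hc).eventually_ge_atTop x).exists
  have hpos : ∀ᶠ x in atTop, N x ≠ 0 := by
    filter_upwards [eventually_gt_atTop (f 0)] with x hx h0
    exact (hmem x).not_gt (h0 ▸ hx)
  have hpred : Tendsto (fun x => ((N x - 1 : ℕ) : ℝ) / x) atTop (𝓝 c⁻¹) := by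
    refine tendsto_natCast_div_of_apply_le_le_apply_succ hf hc tendsto_id ?_
    filter_upwards [hpos] with x hx
    have hsucc : N x - 1 + 1 = N x := Nat.sub_add_cancel (Nat.one_le_iff_ne_zero.2 hx)
    refine ⟨(not_le.1 (Nat.notMem_of_lt_sInf (s := {k | x ≤ f k}) (Nat.sub_one_lt hx))).le, ?_⟩
    rw [hsucc]
    exact hmem x
  refine (add_zero c⁻¹ ▸ hpred.add tendsto_inv_atTop_zero).congr' ?_
  filter_upwards [hpos] with x hx
  rw [Nat.cast_pred (Nat.pos_of_ne_zero hx), inv_eq_one_div, ← add_div, sub_add_cancel]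

lemma tendsto_sSup_setOf_apply_le_div (hf : Tendsto (fun k : ℕ => f k / k) atTop (𝓝 c))
    (hc : 0 < c) : Tendsto (fun x : ℝ => (sSup {k | f k ≤ x} : ℕ) / x) atTop (𝓝 c⁻¹) := by
  refine tendsto_natCast_div_of_apply_le_le_apply_succ hf hc tendsto_id ?_
  filter_upwards [eventually_ge_atTop (f 0)] with x hx
  have hbdd := bddAbove_setOf_apply_le (tendsto_atTop_of_tendsto_div_natCast hf hc) x
  exact ⟨Nat.sSup_mem ⟨0, hx⟩ hbdd,
    (not_le.1 (notMem_of_csSup_lt (s := {k | f k ≤ x}) (Nat.lt_succ_self _) hbdd)).le⟩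

end Inversion

section Tails

variable {a : ℕ → ℝ} {L : ℝ}

lemma eventually_le_exp_pow (hpos : ∀ k, 1 ≤ k → 0 < a k)
    (ha : Tendsto (fun k : ℕ => log (a k) / k) atTop (𝓝 L)) {s : ℝ} (hs : L < s) :
    ∀ᶠ k : ℕ in atTop, a k ≤ exp s ^ k := by
  filter_upwards [ha.eventually_lt_const hs, eventually_ge_atTop 1] with k hk hk1
  rw [div_lt_iff₀ (by positivity)] at hk
  rw [← exp_nat_mul, ← log_le_iff_le_exp (hpos k hk1)]
  linarith

lemma summable_succ_of_tendsto_log_div (hpos : ∀ k, 1 ≤ k → 0 < a k)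
    (ha : Tendsto (fun k : ℕ => log (a k) / k) atTop (𝓝 L)) (hL : L < 0) :
    Summable fun k => a (k + 1) := by
  obtain ⟨s, hLs, hs⟩ := exists_between hL
  refine (summable_nat_add_iff 1).2 (Summable.of_norm_bounded_eventually_nat
    (summable_geometric_of_lt_one (exp_nonneg s) (exp_lt_one_iff.2 hs)) ?_)
  filter_upwards [eventually_le_exp_pow hpos ha hLs, eventually_ge_atTop 1] with k hk hk1
  rwa [norm_of_nonneg (hpos k hk1).le]

lemma summable_tail (hs : Summable fun k => a (k + 1)) (k : ℕ) :
    Summable fun j => a (k + 1 + j) :=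
  ((summable_nat_add_iff 1).1 hs).comp_injective (add_right_injective (k + 1))

lemma le_tailSum (hnonneg : ∀ k, 1 ≤ k → 0 ≤ a k) (hs : Summable fun k => a (k + 1)) (k : ℕ) :
    a (k + 1) ≤ tailSum a k :=
  (summable_tail hs k).le_tsum 0 fun _ _ => hnonneg _ (by omega)

lemma tailSum_le_geometric (hnonneg : ∀ k, 1 ≤ k → 0 ≤ a k) {r : ℝ} (hr0 : 0 ≤ r) (hr1 : r < 1)
    {K : ℕ} (hK : ∀ k, K ≤ k → a k ≤ r ^ k) {k : ℕ} (hk : K ≤ k) :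
    tailSum a k ≤ r ^ (k + 1) * (1 - r)⁻¹ := by
  have hbound (j : ℕ) : a (k + 1 + j) ≤ r ^ (k + 1) * r ^ j := by
    rw [← pow_add]; exact hK _ (by omega)
  have hgeom := (summable_geometric_of_lt_one hr0 hr1).mul_left (r ^ (k + 1))
  rw [← tsum_geometric_of_lt_one hr0 hr1, ← tsum_mul_left]
  exact Summable.tsum_le_tsum hbound
    (hgeom.of_nonneg_of_le (fun _ => hnonneg _ (by omega)) hbound) hgeom

lemma tendsto_log_tailSum_div (hpos : ∀ k, 1 ≤ k → 0 < a k)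
    (ha : Tendsto (fun k : ℕ => log (a k) / k) atTop (𝓝 L)) (hL : L < 0) :
    Tendsto (fun k : ℕ => log (tailSum a k) / k) atTop (𝓝 L) := by
  have hs := summable_succ_of_tendsto_log_div hpos ha hL
  have hnonneg (k : ℕ) (hk : 1 ≤ k) : 0 ≤ a k := (hpos k hk).le
  refine tendsto_order.2 ⟨fun b hb => ?_, fun b hb => ?_⟩
  · filter_upwards [(tendsto_succ_div_natCast ha).eventually_const_lt hb] with k hk
    exact hk.trans_le (div_le_div_of_nonneg_right
      (log_le_log (hpos _ (by omega)) (le_tailSum hnonneg hs k)) (Nat.cast_nonneg _))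
  · obtain ⟨s, hLs, hsb⟩ := exists_between (lt_min hb hL)
    set r := exp s
    have hr1 : r < 1 := exp_lt_one_iff.2 (hsb.trans_le (min_le_right _ _))
    obtain ⟨K, hK⟩ := eventually_atTop.1 (eventually_le_exp_pow hpos ha hLs)
    set D := s - log (1 - r)
    filter_upwards [eventually_ge_atTop (max K 1),
      (tendsto_const_div_atTop_nhds_zero_nat D).eventually_lt_const
        (sub_pos.2 (hsb.trans_le (min_le_left _ _)))] with k hk hD
    have hk0 : (0 : ℝ) < k := by exact_mod_cast (le_max_right K 1).trans hk
    have hlog : log (tailSum a k) ≤ k * s + D := by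
      calc log (tailSum a k) ≤ log (r ^ (k + 1) * (1 - r)⁻¹) :=
            log_le_log ((hpos _ (by omega)).trans_le (le_tailSum hnonneg hs k))
              (tailSum_le_geometric hnonneg (exp_nonneg s) hr1 hK ((le_max_left K 1).trans hk))
        _ = k * s + D := by
            rw [log_mul (by positivity) (inv_ne_zero (sub_ne_zero.2 hr1.ne')), log_pow, log_inv,
              log_exp]
            push_cast; ring
    calc log (tailSum a k) / k ≤ (k * s + D) / k := div_le_div_of_nonneg_right hlog hk0.le
      _ = s + D / k := by field_simp
      _ < b := by linarith

lemma mul_le_one_iff_log_le_neg_log {x t : ℝ} (hx : 0 < x) (ht : 0 < t) :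
    x * t ≤ 1 ↔ log x ≤ -log t := by
  rw [← log_le_log_iff (by positivity) one_pos, log_mul hx.ne' ht.ne', log_one]
  constructor <;> intro h <;> linarith

lemma log_le_mul_iff_neg_log_le {x t : ℝ} (hx : 1 < x) (ht : 0 < t) :
    log x ≤ x * t ↔ -log t ≤ log x - log (log x) := by
  have hx0 : 0 < x := one_pos.trans hx
  rw [← log_le_log_iff (log_pos hx) (by positivity), log_mul hx0.ne' ht.ne']
  constructor <;> intro h <;> linarith

lemma tendsto_sub_log_div_self : Tendsto (fun y => (y - log y) / y) atTop (𝓝 1) := by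
  refine (sub_zero (1 : ℝ) ▸ tendsto_const_nhds.sub
    isLittleO_log_id_atTop.tendsto_div_nhds_zero).congr' ?_
  filter_upwards [eventually_ne_atTop 0] with y hy
  simp [sub_div, div_self hy]

lemma tendsto_sub_log_atTop : Tendsto (fun y => y - log y) atTop atTop :=
  (tendsto_sub_log_div_self.pos_mul_atTop one_pos tendsto_id).congr'
    ((eventually_ne_atTop 0).mono fun _ hy => div_mul_cancel₀ _ hy)

lemma tendsto_sSup_setOf_apply_le_sub_log_div {f : ℕ → ℝ} {c : ℝ}
    (hf : Tendsto (fun k : ℕ => f k / k) atTop (𝓝 c)) (hc : 0 < c) :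
    Tendsto (fun y : ℝ => (sSup {k | f k ≤ y - log y} : ℕ) / y) atTop (𝓝 c⁻¹) := by
  refine (mul_one c⁻¹ ▸ ((tendsto_sSup_setOf_apply_le_div hf hc).comp tendsto_sub_log_atTop).mul
    tendsto_sub_log_div_self).congr' ?_
  filter_upwards [tendsto_sub_log_atTop.eventually_ne_atTop 0] with y hy
  exact div_mul_div_cancel₀ hy

/-- Threshold asymptotics from the proof of Theorem 1:
if `(log d̄_k)/k → log q` with `0 < q < 1` and `d̄_k > 0` for `k ≥ 1`, then
`Σ_{k ≥ 1} d̄_k < ∞`, the thresholds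
`k₀(n) = min {k : n · Σ_{ℓ > k} d̄_ℓ ≤ 1}` and
`k₁(n) = max {k : n · Σ_{ℓ > k} d̄_ℓ ≥ log n}` are well defined for all
sufficiently large `n`, and `k₀(n)/log n → 1/log(1/q)`, `k₁(n)/log n → 1/log(1/q)`. -/
theorem threshold_asymptotics (q : ℝ) (hq0 : 0 < q) (hq1 : q < 1)
    (d : ℕ → ℝ) (hd : ∀ k, 1 ≤ k → 0 < d k)
    (hlim : Tendsto (fun k : ℕ => Real.log (d k) / (k : ℝ)) atTop (nhds (Real.log q))) :
    Summable (fun k : ℕ => d (k + 1)) ∧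
    (∀ᶠ n : ℕ in atTop,
      {k : ℕ | (n : ℝ) * ∑' j : ℕ, d (k + 1 + j) ≤ 1}.Nonempty ∧
      {k : ℕ | Real.log n ≤ (n : ℝ) * ∑' j : ℕ, d (k + 1 + j)}.Nonempty ∧
      BddAbove {k : ℕ | Real.log n ≤ (n : ℝ) * ∑' j : ℕ, d (k + 1 + j)}) ∧
    Tendsto (fun n : ℕ =>
        ((sInf {k : ℕ | (n : ℝ) * ∑' j : ℕ, d (k + 1 + j) ≤ 1} : ℕ) : ℝ) / Real.log n)
      atTop (nhds (1 / Real.log (1 / q))) ∧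
    Tendsto (fun n : ℕ =>
        ((sSup {k : ℕ | Real.log n ≤ (n : ℝ) * ∑' j : ℕ, d (k + 1 + j)} : ℕ) : ℝ) /
          Real.log n)
      atTop (nhds (1 / Real.log (1 / q))) := by
  have hL : log q < 0 := log_neg hq0 hq1
  have hs := summable_succ_of_tendsto_log_div hd hlim hL
  have htail (k : ℕ) : 0 < tailSum d k := (hd _ (by omega)).trans_le (le_tailSum (fun k hk => (hd k hk).le) hs k)
  set f : ℕ → ℝ := fun k => -log (tailSum d k)
  have hf : Tendsto (fun k : ℕ => f k / k) atTop (𝓝 (log (1 / q))) := by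
    simpa only [f, neg_div, one_div, log_inv] using (tendsto_log_tailSum_div hd hlim hL).neg
  have hc : 0 < log (1 / q) := by rw [one_div, log_inv]; linarith
  have hfTop := tendsto_atTop_of_tendsto_div_natCast hf hc
  have hlog : Tendsto (fun n : ℕ => log n) atTop atTop :=
    tendsto_log_atTop.comp tendsto_natCast_atTop_atTop
  have hA : ∀ᶠ n : ℕ in atTop,
      {k : ℕ | (n : ℝ) * ∑' j : ℕ, d (k + 1 + j) ≤ 1} = {k | log n ≤ f k} := by
    filter_upwards [eventually_ge_atTop 1] with n hn
    exact Set.ext fun k => mul_le_one_iff_log_le_neg_log (by exact_mod_cast hn) (htail k)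
  have hB : ∀ᶠ n : ℕ in atTop, {k : ℕ | log n ≤ (n : ℝ) * ∑' j : ℕ, d (k + 1 + j)} =
      {k | f k ≤ log n - log (log n)} := by
    filter_upwards [eventually_ge_atTop 2] with n hn
    exact Set.ext fun k => log_le_mul_iff_neg_log_le (by exact_mod_cast hn) (htail k)
  refine ⟨hs, ?_, ?_, ?_⟩
  · filter_upwards [hA, hB, (tendsto_sub_log_atTop.comp hlog).eventually_ge_atTop (f 0)]
      with n hA hB h0
    rw [hA, hB]
    exact ⟨(hfTop.eventually_ge_atTop _).exists, ⟨0, h0⟩, bddAbove_setOf_apply_le hfTop _⟩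
  · refine (one_div (log (1 / q)) ▸ (tendsto_sInf_setOf_le_apply_div hf hc).comp hlog).congr' ?_
    filter_upwards [hA] with n hA
    simp only [Function.comp_apply, hA]
  · refine (one_div (log (1 / q)) ▸
      (tendsto_sSup_setOf_apply_le_sub_log_div hf hc).comp hlog).congr' ?_
    filter_upwards [hB] with n hB
    simp only [Function.comp_apply, hB]
end Tails
end

section
/- Let A and S be formal power series in one variable x over ℝ satisfying the system A = (1 + A)·x·S and S = (1 + A)·(1 + x·S). Then the constant term of A is 0, the constant term of S is 1, A satisfies the quadratic equation 2·x·A² + (3x − 1)·A + x = 0, and S = 2·A + 1. -/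
section DissectionSystem

variable {R : Type*} [CommRing R] {a s x : R}

theorem chain_eq_two_mul_add_one (ha : a = (1 + a) * x * s) (hs : s = (1 + a) * (1 + x * s)) :
    s = 2 * a + 1 := by
  linear_combination hs - ha

theorem dissection_quadratic (ha : a = (1 + a) * x * s) (hs : s = (1 + a) * (1 + x * s)) :
    2 * x * a ^ 2 + (3 * x - 1) * a + x = 0 := by
  linear_combination -ha - (1 + a) * x * chain_eq_two_mul_add_one ha hs

end DissectionSystem

theorem PowerSeries.constantCoeff_mul_X_mul {R : Type*} [Semiring R] (p q : PowerSeries R) :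
    PowerSeries.constantCoeff (p * PowerSeries.X * q) = 0 := by
  simp

/-- The system `A = (1+A)·x·S`, `S = (1+A)·(1+x·S)` for the generating functions
of dissections and of chains of dissections implies: `A` has constant term `0`,
`S` has constant term `1`, `A` satisfies `2xA² + (3x−1)A + x = 0`, and `S = 2A+1`.
All identities hold in `ℝ[[x]]`. -/
theorem dissection_generating_function_system (A S : PowerSeries ℝ)
    (hA : A = (1 + A) * PowerSeries.X * S)
    (hS : S = (1 + A) * (1 + PowerSeries.X * S)) :
    PowerSeries.constantCoeff A = 0 ∧
    PowerSeries.constantCoeff S = 1 ∧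
    2 * PowerSeries.X * A ^ 2 + (3 * PowerSeries.X - 1) * A + PowerSeries.X = 0 ∧
    S = 2 * A + 1 := by
  have hS' := chain_eq_two_mul_add_one hA hS
  have hA₀ : PowerSeries.constantCoeff A = 0 := by
    rw [hA, PowerSeries.constantCoeff_mul_X_mul]
  refine ⟨hA₀, ?_, dissection_quadratic hA hS, hS'⟩
  simp [hS', hA₀]
end

section
/- Let A ∈ ℝ[[x]] be the unique formal power series with zero constant term satisfying 2·x·A² + (3x − 1)·A + x = 0, and set S = 2A + 1. Work in the ring ℝ[[x, w, t]] of formal power series, where 1 − x·w·S, 1 − x·t·S and 1 − x·(4A + 3) are units (their constant terms equal 1). Define A(x,w) = x·w²·S/(1 − x·w·S) and S(x,w) = w·(1 + x·S)/(1 − x·w·S). Suppose A₁, A₂, S₂ ∈ ℝ[[x, w, t]] satisfy the system: A₁ = (w + A(x,w))·w·x·t·S(x,t); A₂ = (w·t + A₁)·w·x·S(x,t) + A₂·x·w·S + (w + A(x,w))·x·w·S₂(x,1,t); and S₂ = A₂·(1 + x·S) + (w·t + A₁)·x·S(x,t) + (w + A(x,w))·x·S₂(x,1,t), where S₂(x,1,t)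 denotes the substitution w := 1 in S₂. Then: A₁ = x·w²·t²·(1 + x·S) / ((1 − x·w·S)(1 − x·t·S)); A₂(x,1,t) = x·t²·(1 + x·S) / ((1 − x·t·S)²·(1 − x·(4A+3))); S₂(x,1,t) = 2·x·t²·(1 + x·S) / ((1 − x·t·S)²·(1 − x·(4A+3))); and A₂ = x·w²·t²·(1 + x·S)·(P₁ + x·(w·t − w − t)·P₂) / ((1 − x·w·S)²·(1 − x·t·S)²·(1 − x·(4A+3))), where P₁ = 1 − x·(4A + 1) and P₂ = 1 − 2A + x·(2A + 1). -/
/-- The system for the dissection generating functions `A₁(x,w,t)`, `A₂(x,w,t)`,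
`S₂(x,w,t)` (double rooted dissections and chains of dissections) and its solution,
in `ℝ[[x,w,t]]`.  Since formal substitution of `w := 1` is used in the paper's system,
the series `A(x,1)`, `A₁(x,1,t)`, `A₂(x,1,t)`, `S₂(x,1,t)` are introduced here as the
(unique) solutions of the corresponding specialised system.  The series
`A(x,w) = x·w²·S/(1−x·w·S)`, `S(x,w)`, `S(x,t)`, `A(x,1)` are characterised by the
cleared-denominator identities, the denominators being units. -/
theorem dissection_double_root_system
    (x w t : MvPowerSeries (Fin 3) ℝ)
    (hx : x = MvPowerSeries.X 0) (hw : w = MvPowerSeries.X 1)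
    (ht : t = MvPowerSeries.X 2)
    (A : MvPowerSeries (Fin 3) ℝ)
    (hA0 : MvPowerSeries.constantCoeff A = 0)
    (hAq : 2 * x * A ^ 2 + (3 * x - 1) * A + x = 0)
    (S : MvPowerSeries (Fin 3) ℝ) (hS : S = 2 * A + 1)
    -- `Aw = A(x,w)`, `St = S(x,t)`, `A1w = A(x,1)`
    (Aw : MvPowerSeries (Fin 3) ℝ) (hAw : Aw * (1 - x * w * S) = x * w ^ 2 * S)
    (St : MvPowerSeries (Fin 3) ℝ) (hSt : St * (1 - x * t * S) = t * (1 + x * S))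
    (A1w : MvPowerSeries (Fin 3) ℝ) (hA1w : A1w * (1 - x * S) = x * S)
    -- `A11 = A₁(x,1,t)`
    (A11 : MvPowerSeries (Fin 3) ℝ) (hA11 : A11 = (1 + A1w) * x * t * St)
    (A₁ A₂ S₂ A₂1 S₂1 : MvPowerSeries (Fin 3) ℝ)
    -- the combinatorial system
    (h1 : A₁ = (w + Aw) * w * x * t * St)
    (h2 : A₂ = (w * t + A₁) * w * x * St + A₂ * x * w * S + (w + Aw) * x * w * S₂1)
    (h3 : S₂ = A₂ * (1 + x * S) + (w * t + A₁) * x * St + (w + Aw) * x * S₂1)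
    -- the system specialised at `w = 1`, defining `A₂1 = A₂(x,1,t)`, `S₂1 = S₂(x,1,t)`
    (h2' : A₂1 = (t + A11) * x * St + A₂1 * x * S + (1 + A1w) * x * S₂1)
    (h3' : S₂1 = A₂1 * (1 + x * S) + (t + A11) * x * St + (1 + A1w) * x * S₂1) :
    IsUnit (1 - x * w * S) ∧ IsUnit (1 - x * t * S) ∧ IsUnit (1 - x * (4 * A + 3)) ∧
    A₁ * ((1 - x * w * S) * (1 - x * t * S)) = x * w ^ 2 * t ^ 2 * (1 + x * S) ∧
    A₂1 * ((1 - x * t * S) ^ 2 * (1 - x * (4 * A + 3))) = x * t ^ 2 * (1 + x * S) ∧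
    S₂1 * ((1 - x * t * S) ^ 2 * (1 - x * (4 * A + 3))) = 2 * (x * t ^ 2 * (1 + x * S)) ∧
    A₂ * ((1 - x * w * S) ^ 2 * (1 - x * t * S) ^ 2 * (1 - x * (4 * A + 3))) =
      x * w ^ 2 * t ^ 2 * (1 + x * S) *
        ((1 - x * (4 * A + 1)) + x * (w * t - w - t) * (1 - 2 * A + x * (2 * A + 1))) := by
  subst hS
  -- constant coefficient facts
  have hx0 : MvPowerSeries.constantCoeff x = 0 := by
    rw [hx]; simp
  -- units
  have u1 : IsUnit (1 - x * w * (2 * A + 1)) := by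
    rw [MvPowerSeries.isUnit_iff_constantCoeff]
    simp [hx0]
  have u2 : IsUnit (1 - x * t * (2 * A + 1)) := by
    rw [MvPowerSeries.isUnit_iff_constantCoeff]
    simp [hx0]
  have u3 : IsUnit (1 - x * (4 * A + 3)) := by
    rw [MvPowerSeries.isUnit_iff_constantCoeff]
    simp [hx0]
  -- basic identities for A
  have hAS : A * (1 - x * (2 * A + 1)) = x * (2 * A + 1) := by linear_combination -hAq
  have hE : (1 + A) * (1 - x * (2 * A + 1)) = 1 := by linear_combination hAS
  have hA1wA : A1w = A := by
    linear_combination (1 + A) * hA1w - (1 + A) * hAS + (A - A1w) * hE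
  rw [hA1wA] at hA11 h2' h3'
  -- abbreviations
  set Dw := 1 - x * w * (2 * A + 1) with hDw
  set Dt := 1 - x * t * (2 * A + 1) with hDt
  set DA := 1 - x * (4 * A + 3) with hDA
  -- T1
  have hT1 : A₁ * (Dw * Dt) = x * w ^ 2 * t ^ 2 * (1 + x * (2 * A + 1)) := by
    rw [hDw, hDt]
    linear_combination ((1 - x * w * (2 * A + 1)) * (1 - x * t * (2 * A + 1))) * h1 +
      w ^ 2 * x * t * hSt + w * x * t * St * (1 - x * t * (2 * A + 1)) * hAw
  -- M * Dt^2 = K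
  have hM : (t + A11) * x * St * Dt ^ 2 = x * t ^ 2 * (1 + x * (2 * A + 1)) := by
    rw [hDt]
    linear_combination x * St * (1 - x * t * (2 * A + 1)) ^ 2 * hA11 +
      (x * t * (1 - x * t * (2 * A + 1)) +
        (1 + A) * x ^ 2 * t * (St * (1 - x * t * (2 * A + 1)) + t * (1 + x * (2 * A + 1)))) * hSt
      - (x * t ^ 2 * (1 + x * (2 * A + 1))) * x * t * hE
  -- the specialised linear system
  have hCD : S₂1 * DA = 2 * ((t + A11) * x * St) := by
    rw [hDA]
    linear_combination (1 + x * (2 * A + 1)) * h2' + (1 - x * (2 * A + 1)) * h3'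
  have hBD : A₂1 * DA = (t + A11) * x * St := by
    rw [hDA]; rw [hDA] at hCD
    linear_combination (1 + A) * (1 - x * (4 * A + 3)) * h2' + x * (1 + A) ^ 2 * hCD +
      ((t + A11) * x * St - A₂1 * (1 - x * (4 * A + 3))) * hE
  have hT2 : A₂1 * (Dt ^ 2 * DA) = x * t ^ 2 * (1 + x * (2 * A + 1)) := by
    linear_combination Dt ^ 2 * hBD + hM
  have hT3 : S₂1 * (Dt ^ 2 * DA) = 2 * (x * t ^ 2 * (1 + x * (2 * A + 1))) := by
    linear_combination Dt ^ 2 * hCD + 2 * hM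
  refine ⟨u1, u2, u3, hT1, hT2, hT3, ?_⟩
  -- T4
  have hQ : A₂ * (Dw ^ 2 * Dt ^ 2 * DA) =
      x * w ^ 2 * t ^ 2 * (1 + x * (2 * A + 1)) *
        ((1 - x * (4 * A + 1)) + x * (w * t - w - t) * (1 - 2 * A + x * (2 * A + 1))) := by
    rw [hDw, hDt, hDA]; rw [hDw, hDt] at hT1; rw [hDt, hDA] at hT3
    linear_combination
      ((1 - x * w * (2 * A + 1)) * (1 - x * t * (2 * A + 1)) ^ 2 * (1 - x * (4 * A + 3))) * h2 +
      w * x * S₂1 * (1 - x * t * (2 * A + 1)) ^ 2 * (1 - x * (4 * A + 3)) * hAw +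
      w ^ 2 * x * hT3 +
      w * x * St * (1 - x * t * (2 * A + 1)) * (1 - x * (4 * A + 3)) * hT1 +
      w * x * (1 - x * (4 * A + 3)) *
        (w * t * (1 - x * w * (2 * A + 1)) * (1 - x * t * (2 * A + 1)) +
          x * w ^ 2 * t ^ 2 * (1 + x * (2 * A + 1))) * hSt +
      (x ^ 2 * w ^ 2 * t ^ 2 *
        (4 * t + 4 * w - 2 * w * t + 4 * x * t + 8 * x * t * A + 4 * x * w + 8 * x * w * A
          - 8 * x * w * t - 12 * x * w * t * A - 6 * x ^ 2 * w * t - 20 * x ^ 2 * w * t * A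
          - 16 * x ^ 2 * w * t * A ^ 2)) * hAq
  exact hQ
end

section
/- Suppose ρ > 0 and E₀ > 0 are real numbers satisfying E₀ = 2·exp( ρ·E₀² / (1 + ρ·E₀) ) − 1 and 1 = 2·exp( ρ·E₀² / (1 + ρ·E₀) ) · ρ·E₀·(2 + ρ·E₀) / (1 + ρ·E₀)². Then ρ·E₀²·(2 + ρ·E₀) = 1, ρ = (√(1 + 1/E₀) − 1)/E₀, and E₀ + 1 = 2·exp( 1 / (1 + 1/E₀ + √(1 + 1/E₀)) ). -/
/-!
Since `2·exp(ρE₀²/(1+ρE₀)) = E₀ + 1` by the first equation, the second one becomes the polynomial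
identity `(1+ρE₀)² = (E₀+1)·ρE₀(2+ρE₀)`, which simplifies to `ρE₀²(2+ρE₀) = 1`. Dividing by `E₀`
gives `(1+ρE₀)² = 1 + 1/E₀`, so `√(1+1/E₀) = 1+ρE₀`, which yields `ρ`, and the exponent
`ρE₀²/(1+ρE₀)` equals `1/((1+ρE₀)(2+ρE₀)) = 1/((1+ρE₀)² + (1+ρE₀))`.
-/

namespace SPNetwork

theorem mul_sq_mul_eq_one_of_eq_mul_div_sq {ρ E : ℝ} (hd : 1 + ρ * E ≠ 0)
    (h : 1 = (E + 1) * (ρ * E * (2 + ρ * E) / (1 + ρ * E) ^ 2)) :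
    ρ * E ^ 2 * (2 + ρ * E) = 1 := by
  rw [mul_div_assoc', eq_div_iff (pow_ne_zero 2 hd)] at h
  linear_combination -h

theorem one_add_mul_sq_eq {ρ E : ℝ} (hE : E ≠ 0) (h : ρ * E ^ 2 * (2 + ρ * E) = 1) :
    (1 + ρ * E) ^ 2 = 1 + 1 / E := by
  field_simp
  linear_combination h

theorem sqrt_one_add_inv_eq {ρ E : ℝ} (hE : E ≠ 0) (hd : 0 ≤ 1 + ρ * E)
    (h : ρ * E ^ 2 * (2 + ρ * E) = 1) :
    Real.sqrt (1 + 1 / E) = 1 + ρ * E := by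
  rw [← one_add_mul_sq_eq hE h, Real.sqrt_sq hd]

theorem div_one_add_mul_eq {ρ E : ℝ} (h : ρ * E ^ 2 * (2 + ρ * E) = 1) :
    ρ * E ^ 2 / (1 + ρ * E) = 1 / ((1 + ρ * E) ^ 2 + (1 + ρ * E)) := by
  have h2 : 2 + ρ * E ≠ 0 := by
    rintro h0
    simp [h0] at h
  rw [show (1 + ρ * E) ^ 2 + (1 + ρ * E) = (1 + ρ * E) * (2 + ρ * E) by ring, ← h,
    mul_div_mul_right _ _ h2]

end SPNetwork

/-- The characteristic system for the singularity of the SP-network generating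
function `E(x)` at `x = ρ`, `E₀ = E(ρ)`, implies `ρ·E₀²·(2+ρ·E₀) = 1`,
`ρ = (√(1+1/E₀) − 1)/E₀` and `E₀ + 1 = 2·exp(1/(1 + 1/E₀ + √(1+1/E₀)))`. -/
theorem sp_network_singular_system (ρ E₀ : ℝ) (hρ : 0 < ρ) (hE : 0 < E₀)
    (h1 : E₀ = 2 * Real.exp (ρ * E₀ ^ 2 / (1 + ρ * E₀)) - 1)
    (h2 : 1 = 2 * Real.exp (ρ * E₀ ^ 2 / (1 + ρ * E₀)) *
      (ρ * E₀ * (2 + ρ * E₀) / (1 + ρ * E₀) ^ 2)) :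
    ρ * E₀ ^ 2 * (2 + ρ * E₀) = 1 ∧
    ρ = (Real.sqrt (1 + 1 / E₀) - 1) / E₀ ∧
    E₀ + 1 = 2 * Real.exp (1 / (1 + 1 / E₀ + Real.sqrt (1 + 1 / E₀))) := by
  have hd : 0 < 1 + ρ * E₀ := by positivity
  have hexp : 2 * Real.exp (ρ * E₀ ^ 2 / (1 + ρ * E₀)) = E₀ + 1 := by linarith
  rw [hexp] at h2
  have hrel := SPNetwork.mul_sq_mul_eq_one_of_eq_mul_div_sq hd.ne' h2
  have hsqrt := SPNetwork.sqrt_one_add_inv_eq hE.ne' hd.le hrel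
  refine ⟨hrel, ?_, ?_⟩
  · rw [hsqrt]
    field_simp
    ring
  · rw [hsqrt, ← SPNetwork.one_add_mul_sq_eq hE.ne' hrel,
      ← SPNetwork.div_one_add_mul_eq hrel, hexp]
end

section
/- Let x > 0 and E > 0 be real numbers, and suppose real numbers w₀ > −1 and D₀ satisfy the system D₀ = (1 + w₀)·exp( x·D₀·E / (1 + x·E) ) − 1 and 1 = (1 + w₀)·exp( x·D₀·E / (1 + x·E) ) · x·E / (1 + x·E). Then D₀ = 1/(x·E) and w₀ = (1 + 1/(x·E))·exp( −1/(1 + x·E) ) − 1. -/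
/-- The characteristic system for the singularity in `w` of the bivariate
SP-network generating function `D(x,w)` determines the singular point `w₀` and the
singular value `D₀`: `D₀ = 1/(x·E)` and
`w₀ = (1 + 1/(x·E))·exp(−1/(1+x·E)) − 1`. -/
theorem sp_network_w_singularity (x E w₀ D₀ : ℝ) (hx : 0 < x) (hE : 0 < E)
    (hw : -1 < w₀)
    (h1 : D₀ = (1 + w₀) * Real.exp (x * D₀ * E / (1 + x * E)) - 1)
    (h2 : 1 = (1 + w₀) * Real.exp (x * D₀ * E / (1 + x * E)) * (x * E / (1 + x * E))) :
    D₀ = 1 / (x * E) ∧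
    w₀ = (1 + 1 / (x * E)) * Real.exp (-1 / (1 + x * E)) - 1 := by
  have ht : 0 < x * E := mul_pos hx hE
  have ht1 : 0 < 1 + x * E := by linarith
  have hkey : (1 + w₀) * Real.exp (x * D₀ * E / (1 + x * E)) = (1 + x * E) / (x * E) := by
    field_simp at h2 ⊢
    linarith
  have hD : D₀ = 1 / (x * E) := by
    rw [hkey] at h1
    field_simp at h1 ⊢
    linarith
  refine ⟨hD, ?_⟩
  have harg : x * D₀ * E / (1 + x * E) = 1 / (1 + x * E) := by
    rw [hD]; field_simp
  rw [harg] at hkey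
  have hexp : Real.exp (-1 / (1 + x * E)) = (Real.exp (1 / (1 + x * E)))⁻¹ := by
    rw [← Real.exp_neg]; ring_nf
  rw [hexp]
  have hepos : Real.exp (1 / (1 + x * E)) ≠ 0 := (Real.exp_pos _).ne'
  field_simp at hkey ⊢
  nlinarith [hkey]
end

section
/- Work with formal power series over ℝ, where exp denotes the formal exponential of a series with zero constant term. (a) Let E, S ∈ ℝ[[x]] with S of zero constant term satisfy E = 2·exp(S) − 1 and S = x·(E − S)·E. Then (1 + x·E)·S = x·E², and hence E = 2·exp( x·E² / (1 + x·E) ) − 1 (note 1 + x·E is a unit in ℝ[[x]]). (b) Let in addition D, Ŝ ∈ ℝ[[x, w]] with Ŝ of zero constant term satisfy D = (1 + w)·exp(Ŝ) − 1 and Ŝ = x·(D − Ŝ)·E. Then (1 + x·E)·Ŝ = x·E·D. (c) Let further D₁, S₁ ∈ ℝ[[x, w, t]] with S₁ of zero constant term satisfy D₁ = (1 + w·t)·exp(S₁) − 1 and S₁ = x·(D(x,w) − Ŝ(x,w))·D(x,t), where D(x,t) denotes the substitution w := t in D. Then (1 + x·E)·S₁ = x·D(x,w)·D(x,t), and hence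 D₁ = (1 + w·t)·exp( x·D(x,w)·D(x,t) / (1 + x·E) ) − 1. -/
/-- The formal exponential of a multivariate formal power series.  For a series `S`
with zero constant term this agrees with `Σ_{n≥0} Sⁿ/n!`, since the coefficient of a
monomial `m` in `Sⁿ` vanishes whenever `n` exceeds the total degree of `m`. -/
noncomputable def formalExp {σ : Type*} (S : MvPowerSeries σ ℝ) : MvPowerSeries σ ℝ :=
  fun m => ∑ n ∈ Finset.range ((m.sum fun _ e => e) + 1),
    MvPowerSeries.coeff m (S ^ n) / (n.factorial : ℝ)

/-! The equations for `S` and `Ŝ` both have the shape `B = x·(A − B)·E`, which is equivalent to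
`(1 + x·E)·(A − B) = A`. Multiplying `S₁ = x·(D − Ŝ)·D(x,t)` by `1 + x·E` therefore gives
`x·D·D(x,t)`. As `1 + x·E` has constant term `1`, it is invertible, and the exponential forms
follow by substituting the solved `S` and `S₁`. -/

section CommRing

variable {R : Type*} [CommRing R] {x E A B C F : R}

theorem one_add_mul_mul_sub_eq (hB : B = x * (A - B) * E) : (1 + x * E) * (A - B) = A := by
  linear_combination -hB

theorem one_add_mul_mul_eq_of_eq_mul_sub_mul (hB : B = x * (A - B) * E)
    (hC : C = x * (A - B) * F) : (1 + x * E) * C = x * A * F := by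
  linear_combination (1 + x * E) * hC + x * F * one_add_mul_mul_sub_eq hB

end CommRing

theorem MvPowerSeries.eq_mul_inv_of_mul_eq {σ k : Type*} [Field k] {u B C : MvPowerSeries σ k}
    (hu : constantCoeff u ≠ 0) (h : u * B = C) : B = C * u⁻¹ :=
  (MvPowerSeries.eq_mul_inv_iff_mul_eq hu).2 (by rw [mul_comm, h])

theorem sp_network_generating_function_system_general
    (x w t : MvPowerSeries (Fin 3) ℝ)
    (hx : x = MvPowerSeries.X 0)
    (E S D Sh Dt D₁ S₁ : MvPowerSeries (Fin 3) ℝ)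
    -- (a)
    (hE : E = 2 * formalExp S - 1) (hSe : S = x * (E - S) * E)
    -- (b)
    (hShe : Sh = x * (D - Sh) * E)
    -- (c)
    (hD₁ : D₁ = (1 + w * t) * formalExp S₁ - 1) (hS₁e : S₁ = x * (D - Sh) * Dt) :
    ((1 + x * E) * S = x * E ^ 2 ∧ IsUnit (1 + x * E) ∧
      E = 2 * formalExp (x * E ^ 2 * (1 + x * E)⁻¹) - 1) ∧
    (1 + x * E) * Sh = x * E * D ∧
    ((1 + x * E) * S₁ = x * D * Dt ∧
      D₁ = (1 + w * t) * formalExp (x * D * Dt * (1 + x * E)⁻¹) - 1) := by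
  have hu : MvPowerSeries.constantCoeff (1 + x * E) ≠ 0 := by simp [hx]
  have ha : (1 + x * E) * S = x * E ^ 2 := by
    rw [sq, ← mul_assoc]
    exact one_add_mul_mul_eq_of_eq_mul_sub_mul hSe hSe
  have hc : (1 + x * E) * S₁ = x * D * Dt := one_add_mul_mul_eq_of_eq_mul_sub_mul hShe hS₁e
  refine ⟨⟨ha, MvPowerSeries.isUnit_iff_constantCoeff.2 (isUnit_iff_ne_zero.2 hu), ?_⟩,
    (one_add_mul_mul_eq_of_eq_mul_sub_mul hShe hShe).trans (mul_right_comm _ _ _), hc, ?_⟩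
  · rw [← MvPowerSeries.eq_mul_inv_of_mul_eq hu ha, ← hE]
  · rw [← MvPowerSeries.eq_mul_inv_of_mul_eq hu hc, ← hD₁]

/-- The combinatorial systems for SP networks.  `E`, `S` are the generating functions
of SP networks and series SP networks; `D = D(x,w)`, `Sh = Sh(x,w)` additionally mark the
degree of the first pole; `D₁ = D₁(x,w,t)`, `S₁` mark the degrees of both poles.
`Dt`, `Sht` denote the substitution `w := t` in `D`, `Sh`, encoded as the (unique)
solution of the correspondingly renamed system.  Conclusions:
(a) `(1+xE)·S = xE²`, hence `E = 2·exp(xE²/(1+xE)) − 1` (with `1+xE` a unit);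
(b) `(1+xE)·Sh = xED`;
(c) `(1+xE)·S₁ = x·D(x,w)·D(x,t)`, hence `D₁ = (1+wt)·exp(x·D(x,w)·D(x,t)/(1+xE)) − 1`. -/
theorem sp_network_generating_function_system
    (x w t : MvPowerSeries (Fin 3) ℝ)
    (hx : x = MvPowerSeries.X 0) (hw : w = MvPowerSeries.X 1)
    (ht : t = MvPowerSeries.X 2)
    (E S D Sh Dt Sht D₁ S₁ : MvPowerSeries (Fin 3) ℝ)
    -- (a)
    (hS0 : MvPowerSeries.constantCoeff S = 0)
    (hE : E = 2 * formalExp S - 1) (hSe : S = x * (E - S) * E)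
    -- (b)
    (hSh0 : MvPowerSeries.constantCoeff Sh = 0)
    (hD : D = (1 + w) * formalExp Sh - 1) (hShe : Sh = x * (D - Sh) * E)
    -- the system for `D(x,t) = Dt`, `Sh(x,t) = Sht` (substitution `w := t`)
    (hSht0 : MvPowerSeries.constantCoeff Sht = 0)
    (hDt : Dt = (1 + t) * formalExp Sht - 1) (hShte : Sht = x * (Dt - Sht) * E)
    -- (c)
    (hS₁0 : MvPowerSeries.constantCoeff S₁ = 0)
    (hD₁ : D₁ = (1 + w * t) * formalExp S₁ - 1) (hS₁e : S₁ = x * (D - Sh) * Dt) :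
    ((1 + x * E) * S = x * E ^ 2 ∧ IsUnit (1 + x * E) ∧
      E = 2 * formalExp (x * E ^ 2 * (1 + x * E)⁻¹) - 1) ∧
    (1 + x * E) * Sh = x * E * D ∧
    ((1 + x * E) * S₁ = x * D * Dt ∧
      D₁ = (1 + w * t) * formalExp (x * D * Dt * (1 + x * E)⁻¹) - 1) :=
  sp_network_generating_function_system_general x w t hx E S D Sh Dt D₁ S₁ hE hSe hShe hD₁ hS₁e
end

section
/- Work with formal power series over ℝ. Let E ∈ ℝ[[x]] satisfy E = 2·exp( x·E² / (1 + x·E) ) − 1 (so E has constant term 1), and let D ∈ ℝ[[x, t]] satisfy D = (1 + t)·exp( x·E·D / (1 + x·E) ) − 1. Suppose D₂, S₂ ∈ ℝ[[x, t]] satisfy D₂ = (1 + E)·S₂ and S₂ = x·(D₂ − S₂)·E + x·( D − x·E·D/(1 + x·E) )·D + x·( E − x·E²/(1 + x·E) )·D₂. Then (1 − 2·x·E² − x²·E³)·S₂ = x·D² and (1 − 2·x·E² − x²·E³)·D₂ = x·(1 + E)·D²; in particular, since 1 − 2·x·E² − x²·E³ has constant term 1 and is a unit, D₂ = x·(1 +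 E)·D² / (1 − 2·x·E² − x²·E³) and S₂ = x·D² / (1 − 2·x·E² − x²·E³). -/
/-- Here `u` stands for `(1 + xE)⁻¹`. -/
theorem mul_S₂_eq_of_marked_vertex_system {R : Type*} [CommRing R] {x E D D₂ S₂ u : R}
    (hu : (1 + x * E) * u = 1) (hD₂ : D₂ = (1 + E) * S₂)
    (hS₂ : S₂ = x * (D₂ - S₂) * E + x * (D - x * E * D * u) * D +
      x * (E - x * E ^ 2 * u) * D₂) :
    (1 - 2 * x * E ^ 2 - x ^ 2 * E ^ 3) * S₂ = x * D ^ 2 := by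
  subst hD₂
  linear_combination (1 + x * E) * hS₂ +
    (-(x ^ 2 * E * D ^ 2) - x ^ 2 * E ^ 2 * (1 + E) * S₂) * hu

theorem MvPowerSeries.constantCoeff_marked_vertex_denominator {σ R : Type*} [CommRing R]
    {x E : MvPowerSeries σ R} (hx : constantCoeff x = 0) :
    constantCoeff (1 - 2 * x * E ^ 2 - x ^ 2 * E ^ 3) = 1 := by
  simp [hx]

theorem sp_network_marked_vertex_system_general
    (x : MvPowerSeries (Fin 2) ℝ)
    (hx : x = MvPowerSeries.X 0)
    (E D D₂ S₂ : MvPowerSeries (Fin 2) ℝ)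
    (hD₂ : D₂ = (1 + E) * S₂)
    (hS₂ : S₂ = x * (D₂ - S₂) * E + x * (D - x * E * D * (1 + x * E)⁻¹) * D +
      x * (E - x * E ^ 2 * (1 + x * E)⁻¹) * D₂) :
    (1 - 2 * x * E ^ 2 - x ^ 2 * E ^ 3) * S₂ = x * D ^ 2 ∧
    (1 - 2 * x * E ^ 2 - x ^ 2 * E ^ 3) * D₂ = x * (1 + E) * D ^ 2 ∧
    IsUnit (1 - 2 * x * E ^ 2 - x ^ 2 * E ^ 3) ∧
    D₂ = x * (1 + E) * D ^ 2 * (1 - 2 * x * E ^ 2 - x ^ 2 * E ^ 3)⁻¹ ∧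
    S₂ = x * D ^ 2 * (1 - 2 * x * E ^ 2 - x ^ 2 * E ^ 3)⁻¹ := by
  have hx₀ : MvPowerSeries.constantCoeff x = 0 := by simp [hx]
  have hu : (1 + x * E) * (1 + x * E)⁻¹ = 1 :=
    MvPowerSeries.mul_inv_cancel _ (by simp [hx₀])
  have hQ := MvPowerSeries.constantCoeff_marked_vertex_denominator (E := E) hx₀
  have hQ₀ : MvPowerSeries.constantCoeff (1 - 2 * x * E ^ 2 - x ^ 2 * E ^ 3) ≠ 0 := by
    simp [hQ]
  have hS := mul_S₂_eq_of_marked_vertex_system hu hD₂ hS₂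
  have hD : (1 - 2 * x * E ^ 2 - x ^ 2 * E ^ 3) * D₂ = x * (1 + E) * D ^ 2 := by
    rw [hD₂]
    linear_combination (1 + E) * hS
  refine ⟨hS, hD, MvPowerSeries.isUnit_iff_constantCoeff.2 (hQ ▸ isUnit_one), ?_, ?_⟩
  · exact (MvPowerSeries.eq_mul_inv_iff_mul_eq hQ₀).2 (by rw [mul_comm, hD])
  · exact (MvPowerSeries.eq_mul_inv_iff_mul_eq hQ₀).2 (by rw [mul_comm, hS])

/-- The combinatorial system for SP networks carrying an additional marked non-pole
vertex (`D₂`, `S₂`, after setting the first-pole variable `w` equal to `1`), and its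
solution: `D₂ = x(1+E)D²/(1−2xE²−x²E³)` and `S₂ = xD²/(1−2xE²−x²E³)`, in `ℝ[[x,t]]`. -/
theorem sp_network_marked_vertex_system
    (x t : MvPowerSeries (Fin 2) ℝ)
    (hx : x = MvPowerSeries.X 0) (ht : t = MvPowerSeries.X 1)
    (E D D₂ S₂ : MvPowerSeries (Fin 2) ℝ)
    (hE : E = 2 * formalExp (x * E ^ 2 * (1 + x * E)⁻¹) - 1)
    (hD : D = (1 + t) * formalExp (x * E * D * (1 + x * E)⁻¹) - 1)
    (hD₂ : D₂ = (1 + E) * S₂)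
    (hS₂ : S₂ = x * (D₂ - S₂) * E + x * (D - x * E * D * (1 + x * E)⁻¹) * D +
      x * (E - x * E ^ 2 * (1 + x * E)⁻¹) * D₂) :
    (1 - 2 * x * E ^ 2 - x ^ 2 * E ^ 3) * S₂ = x * D ^ 2 ∧
    (1 - 2 * x * E ^ 2 - x ^ 2 * E ^ 3) * D₂ = x * (1 + E) * D ^ 2 ∧
    IsUnit (1 - 2 * x * E ^ 2 - x ^ 2 * E ^ 3) ∧
    D₂ = x * (1 + E) * D ^ 2 * (1 - 2 * x * E ^ 2 - x ^ 2 * E ^ 3)⁻¹ ∧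
    S₂ = x * D ^ 2 * (1 - 2 * x * E ^ 2 - x ^ 2 * E ^ 3)⁻¹ :=
  sp_network_marked_vertex_system_general x hx E D D₂ S₂ hD₂ hS₂
end
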